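/- arXiv:1403.2627 — 7 statements merged into one kernel-verified Lean document; each statement's English description precedes it below -/
import Mathlib

section
/- Let m ∈ ℕ, 0 ≤ α ≤ 1, M ≥ 1, and v ∈ h^{-mα}_0. Then for every λ ∈ Ext_M one has the Hilbert–Schmidt bound (Σ_{k∈ℤ} Σ_{j∈ℤ} |v(k−j)|² / (|λ − k^{2m}π^{2m}|·|λ − j^{2m}π^{2m}|))^{1/2} ≤ 2^{2m+1} ‖v‖_{h^{-mα}} · M^{−((1−α)/2 + 1/4)}; in particular the operator S_{mλ} on ℓ²(ℤ,ℂ) satisfies ‖S_{mλ}‖ ≤ 2^{2m+1} ‖v‖_{h^{-mα}} M^{−((1−α)/2+1/4)}. -/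
open scoped BigOperators
noncomputable section

/-- The weight `⟨k⟩ = 1 + |k|`. -/
def wt (k : ℤ) : ℝ := 1 + |(k : ℝ)|

/-- `a ∈ h^s`: square-summability of `a` with weight `⟨k⟩^{2s}`. -/
def MemHs (s : ℝ) (a : ℤ → ℂ) : Prop :=
  Summable fun k : ℤ => wt k ^ (2 * s) * ‖a k‖ ^ 2

/-- The `h^s` norm. -/
def hsNorm (s : ℝ) (a : ℤ → ℂ) : ℝ :=
  Real.sqrt (∑' k : ℤ, wt k ^ (2 * s) * ‖a k‖ ^ 2)

/-- `λ` is a periodic eigenvalue of `v`. -/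
def IsPeriodicEigenvalue (m : ℕ) (α : ℝ) (v : ℤ → ℂ) (lam : ℂ) : Prop :=
  ∃ a : ℤ → ℂ, a ≠ 0 ∧ MemHs ((m : ℝ) * (2 - α)) a ∧
    ∀ k : ℤ, (k : ℂ) ^ (2 * m) * (Real.pi : ℂ) ^ (2 * m) * a k
      + ∑' j : ℤ, v (k - j) * a j = lam * a k

/-- `|λ - k^{2m} π^{2m}|`. -/
def diagAbs (m : ℕ) (lam : ℂ) (k : ℤ) : ℝ :=
  ‖lam - (k : ℂ) ^ (2 * m) * (Real.pi : ℂ) ^ (2 * m)‖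

/-- The matrix `S_{mλ}(k,j)`. -/
def Smat (m : ℕ) (v : ℤ → ℂ) (lam : ℂ) (k j : ℤ) : ℂ :=
  v (k - j) / ((Real.sqrt (diagAbs m lam k) * Real.sqrt (diagAbs m lam j) : ℝ) : ℂ)

/-- The matrix `S` defines a bounded operator on `ℓ²(ℤ, ℂ)` of norm at most `c`. -/
def MatOpNormLE (S : ℤ → ℤ → ℂ) (c : ℝ) : Prop :=
  ∃ T : lp (fun _ : ℤ => ℂ) 2 →L[ℂ] lp (fun _ : ℤ => ℂ) 2,
    ‖T‖ ≤ c ∧ ∀ a : lp (fun _ : ℤ => ℂ) 2, ∀ k : ℤ, T a k = ∑' j : ℤ, S k j * a j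

/-- The matrix `S` defines a bounded operator on `ℓ²(ℤ, ℂ)` of norm less than `c`. -/
def MatOpNormLT (S : ℤ → ℤ → ℂ) (c : ℝ) : Prop :=
  ∃ T : lp (fun _ : ℤ => ℂ) 2 →L[ℂ] lp (fun _ : ℤ => ℂ) 2,
    ‖T‖ < c ∧ ∀ a : lp (fun _ : ℤ => ℂ) 2, ∀ k : ℤ, T a k = ∑' j : ℤ, S k j * a j

/-- `Ext_M = {λ : Re λ ≤ |Im λ| - M}`. -/
def ExtSet (M : ℝ) : Set ℂ := {lam : ℂ | lam.re ≤ |lam.im| - M}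

/-- `Vert^m_n(r)`. -/
def VertSet (m n : ℕ) (r : ℝ) : Set ℂ :=
  {lam : ℂ | |(lam - (n : ℂ) ^ (2 * m) * (Real.pi : ℂ) ^ (2 * m)).re| ≤ (n : ℝ) ^ m * Real.pi ^ (2 * m)
    ∧ r ≤ ‖lam - (n : ℂ) ^ (2 * m) * (Real.pi : ℂ) ^ (2 * m)‖}

/-!
For `λ ∈ Ext_M` every `d_k = |λ - k^{2m} π^{2m}|` obeys `M + (π k)^{2m} ≤ 2 d_k`. Grouping the
Hilbert–Schmidt sum along the diagonals `k - j = l`, it suffices to bound the row sums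
`∑ₖ 1 / (d_k d_{k-l})` by `⟨l⟩^{-2mα}` times the constant. One of `|k|`, `|k - l|` is at least
`|l| / 2`, so `1 / (A_k A_{k-l}) ≤ E_l⁻¹ (1 / A_k + 1 / A_{k-l})` with `A_k = M + (π k)^{2m}` and
`E_l = M + (π l / 2)^{2m}`; comparison with `∑ 1 / (M + 9 k²)` gives `∑ₖ 1 / A_k ≤ 3 / √M`, and
`E_l ≥ (π/4)^{2m} M^{1-α} ⟨l⟩^{2mα}` interpolates between `E_l ≥ M` and `E_l ≳ ⟨l⟩^{2m}`.
A matrix with square-summable entries acts on `ℓ²` with norm at most its Hilbert–Schmidt norm,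
by Cauchy–Schwarz in each row.
-/

open Real
open scoped ComplexConjugate

lemma memℓp_two_iff {ι : Type*} {E : ι → Type*} [∀ i, NormedAddCommGroup (E i)] {f : ∀ i, E i} :
    Memℓp f 2 ↔ Summable fun i => ‖f i‖ ^ 2 := by
  rw [memℓp_gen_iff (by norm_num)]
  norm_num

lemma lp.norm_sq_eq_tsum {ι : Type*} {E : ι → Type*} [∀ i, NormedAddCommGroup (E i)]
    (f : lp E 2) : ‖f‖ ^ 2 = ∑' i, ‖f i‖ ^ 2 := by
  simpa using lp.norm_rpow_eq_tsum (p := 2) (by norm_num) f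

lemma matOpNormLE_of_tsum_sq_le {F : ℤ → ℤ → ℂ} {c : ℝ} (hc : 0 ≤ c)
    (hF : Summable fun p : ℤ × ℤ => ‖F p.1 p.2‖ ^ 2)
    (hFc : ∑' p : ℤ × ℤ, ‖F p.1 p.2‖ ^ 2 ≤ c ^ 2) : MatOpNormLE F c := by
  obtain ⟨hrow, hcol⟩ := (summable_prod_of_nonneg fun p => sq_nonneg ‖F p.1 p.2‖).mp hF
  let r : ℤ → lp (fun _ : ℤ => ℂ) 2 := fun k =>
    ⟨fun j => conj (F k j), memℓp_two_iff.mpr (by simpa using hrow k)⟩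
  have hr : ∀ k, ‖r k‖ ^ 2 = ∑' j, ‖F k j‖ ^ 2 := fun k => by
    simp [lp.norm_sq_eq_tsum, r]
  have hinner : ∀ k a, inner ℂ (r k) a = ∑' j, F k j * a j := fun k a => by
    simp [lp.inner_eq_tsum, r, mul_comm]
  have hsq : ∀ (a : lp (fun _ : ℤ => ℂ) 2) k,
      ‖inner ℂ (r k) a‖ ^ 2 ≤ (∑' j, ‖F k j‖ ^ 2) * ‖a‖ ^ 2 := fun a k => by
    rw [← hr, ← mul_pow]
    exact pow_le_pow_left₀ (norm_nonneg _) (norm_inner_le_norm _ _) 2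
  have hsum : ∀ a : lp (fun _ : ℤ => ℂ) 2, Summable fun k => ‖inner ℂ (r k) a‖ ^ 2 := fun a =>
    (hcol.mul_right _).of_nonneg_of_le (fun k => sq_nonneg _) (hsq a)
  let T : lp (fun _ : ℤ => ℂ) 2 →ₗ[ℂ] lp (fun _ : ℤ => ℂ) 2 :=
    { toFun := fun a => ⟨fun k => inner ℂ (r k) a, memℓp_two_iff.mpr (hsum a)⟩
      map_add' := fun a b => by ext k; exact inner_add_right _ _ _
      map_smul' := fun z a => by ext k; exact inner_smul_right _ _ _ }
  have hT : ∀ a, ‖T a‖ ≤ c * ‖a‖ := fun a => by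
    refine (pow_le_pow_iff_left₀ (norm_nonneg _) (by positivity) two_ne_zero).mp ?_
    calc ‖T a‖ ^ 2 = ∑' k, ‖inner ℂ (r k) a‖ ^ 2 := lp.norm_sq_eq_tsum _
      _ ≤ ∑' k, (∑' j, ‖F k j‖ ^ 2) * ‖a‖ ^ 2 := (hsum a).tsum_le_tsum (hsq a) (hcol.mul_right _)
      _ = (∑' p : ℤ × ℤ, ‖F p.1 p.2‖ ^ 2) * ‖a‖ ^ 2 := by
          rw [tsum_mul_right, hF.tsum_prod' hrow]
      _ ≤ (c * ‖a‖) ^ 2 := by rw [mul_pow]; gcongr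
  exact ⟨T.mkContinuous c hT, T.mkContinuous_norm_le hc hT, fun a k => hinner k a⟩

lemma summable_and_tsum_sq_div_mul_le {v : ℤ → ℂ} {d w : ℤ → ℝ} {B : ℝ} (hd : ∀ k, 0 < d k)
    (hrow : ∀ l, Summable (fun k => (d k * d (k - l))⁻¹) ∧
      ∑' k, (d k * d (k - l))⁻¹ ≤ w l * B)
    (hv : Summable fun l => w l * ‖v l‖ ^ 2) :
    Summable (fun p : ℤ × ℤ => ‖v (p.1 - p.2)‖ ^ 2 / (d p.1 * d p.2)) ∧
      ∑' p : ℤ × ℤ, ‖v (p.1 - p.2)‖ ^ 2 / (d p.1 * d p.2) ≤ (∑' l, w l * ‖v l‖ ^ 2) * B := by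
  let G : ℤ × ℤ → ℝ := fun q => ‖v q.1‖ ^ 2 * (d q.2 * d (q.2 - q.1))⁻¹
  -- `(l, k) ↦ (k, k - l)` sorts the entries of the matrix by diagonals `k - j = l`
  let e : ℤ × ℤ ≃ ℤ × ℤ :=
    { toFun := fun q => (q.2, q.2 - q.1)
      invFun := fun p => (p.1 - p.2, p.1)
      left_inv := fun q => by simp
      right_inv := fun p => by simp }
  have hGe : (fun p : ℤ × ℤ => ‖v (p.1 - p.2)‖ ^ 2 / (d p.1 * d p.2)) ∘ e = G := by
    ext q; simp [e, G, div_eq_mul_inv]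
  have hG0 : 0 ≤ G := fun q => by
    have := hd q.2; have := hd (q.2 - q.1)
    dsimp only [G, Pi.zero_apply]
    positivity
  have hGrow : ∀ l, Summable fun k => G (l, k) := fun l => (hrow l).1.mul_left (‖v l‖ ^ 2)
  have hGrow_le : ∀ l, ∑' k, G (l, k) ≤ w l * ‖v l‖ ^ 2 * B := fun l => by
    show ∑' k, ‖v l‖ ^ 2 * (d k * d (k - l))⁻¹ ≤ _
    rw [tsum_mul_left, mul_comm (w l), mul_assoc]
    exact mul_le_mul_of_nonneg_left (hrow l).2 (sq_nonneg _)
  have hGcol : Summable fun l => ∑' k, G (l, k) :=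
    (hv.mul_right B).of_nonneg_of_le (fun l => tsum_nonneg fun k => hG0 _) hGrow_le
  have hG : Summable G := (summable_prod_of_nonneg hG0).mpr ⟨hGrow, hGcol⟩
  refine ⟨e.summable_iff.mp (hGe ▸ hG), ?_⟩
  calc ∑' p : ℤ × ℤ, ‖v (p.1 - p.2)‖ ^ 2 / (d p.1 * d p.2) = ∑' q, G q := by
        rw [← hGe]; exact (e.tsum_eq _).symm
    _ = ∑' l, ∑' k, G (l, k) := hG.tsum_prod' hGrow
    _ ≤ ∑' l, w l * ‖v l‖ ^ 2 * B := hGcol.tsum_le_tsum hGrow_le (hv.mul_right B)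
    _ = (∑' l, w l * ‖v l‖ ^ 2) * B := tsum_mul_right

lemma sum_range_inv_add_mul_sq_le {a b : ℝ} (ha : 0 < a) (hb : 0 < b) (N n : ℕ) :
    ∑ i ∈ Finset.range n, (a + b * (i : ℝ) ^ 2)⁻¹ ≤ (N + 1) / a + 2 / (b * (N + 1)) := by
  have hpos : ∀ i : ℕ, 0 < a + b * (i : ℝ) ^ 2 := fun i => by positivity
  rw [← Finset.sum_filter_add_sum_filter_not _ (· ≤ N)]
  gcongr
  · calc ∑ i ∈ (Finset.range n).filter (· ≤ N), (a + b * (i : ℝ) ^ 2)⁻¹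
        ≤ ∑ i ∈ Finset.range (N + 1), a⁻¹ := by
          refine Finset.sum_le_sum_of_subset_of_nonneg ?_ (fun i _ _ => by positivity) |>.trans'
            (Finset.sum_le_sum fun i _ => inv_anti₀ ha (by nlinarith [hpos i, sq_nonneg (i : ℝ)]))
          intro i hi
          simp only [Finset.mem_filter, Finset.mem_range] at hi ⊢
          omega
      _ = (N + 1) / a := by simp [div_eq_mul_inv]
  · calc ∑ i ∈ (Finset.range n).filter (¬ · ≤ N), (a + b * (i : ℝ) ^ 2)⁻¹
        ≤ ∑ i ∈ Finset.Ioo N n, b⁻¹ * ((i : ℝ) ^ 2)⁻¹ := by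
          refine Finset.sum_le_sum_of_subset_of_nonneg ?_ (fun i _ _ => by positivity) |>.trans'
            (Finset.sum_le_sum fun i hi => ?_)
          · intro i hi
            simp only [Finset.mem_filter, Finset.mem_range, Finset.mem_Ioo] at hi ⊢
            omega
          · have hi : (0 : ℝ) < i := by
              simp only [Finset.mem_filter] at hi
              exact_mod_cast (by omega : 0 < i)
            rw [← mul_inv]
            exact inv_anti₀ (by positivity) (by nlinarith [ha])
      _ ≤ b⁻¹ * (2 / (N + 1)) := by
          rw [← Finset.mul_sum]
          gcongr
          exact_mod_cast sum_Ioo_inv_sq_le N n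
      _ = 2 / (b * (N + 1)) := by field_simp

lemma summable_and_tsum_inv_add_mul_sq_le {a b s : ℝ} (ha : 0 < a) (hb : 0 < b) (hs : 0 < s) :
    Summable (fun n : ℕ => (a + b * (n : ℝ) ^ 2)⁻¹) ∧
      ∑' n : ℕ, (a + b * (n : ℝ) ^ 2)⁻¹ ≤ (s + 1) / a + 2 / (b * s) := by
  set N := ⌊s⌋₊
  have hN : (N : ℝ) ≤ s := Nat.floor_le hs.le
  have hN' : s ≤ N + 1 := (Nat.lt_floor_add_one s).le
  have hbound : (N + 1) / a + 2 / (b * (N + 1)) ≤ (s + 1) / a + 2 / (b * s) := by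
    gcongr
  have hnonneg : ∀ n : ℕ, 0 ≤ (a + b * (n : ℝ) ^ 2)⁻¹ := fun n => by positivity
  have hpartial := fun n => (sum_range_inv_add_mul_sq_le ha hb N n).trans hbound
  exact ⟨summable_of_sum_range_le hnonneg hpartial, Real.tsum_le_of_sum_range_le hnonneg hpartial⟩

lemma summable_and_tsum_int_inv_add_mul_sq_le {a b s : ℝ} (ha : 0 < a) (hb : 0 < b) (hs : 0 < s) :
    Summable (fun k : ℤ => (a + b * (k : ℝ) ^ 2)⁻¹) ∧
      ∑' k : ℤ, (a + b * (k : ℝ) ^ 2)⁻¹ ≤ 2 * ((s + 1) / a + 2 / (b * s)) - a⁻¹ := by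
  obtain ⟨hsum, hle⟩ := summable_and_tsum_inv_add_mul_sq_le ha hb hs
  set f : ℤ → ℝ := fun k => (a + b * (k : ℝ) ^ 2)⁻¹
  have hpos : ∀ n : ℕ, f n = (a + b * (n : ℝ) ^ 2)⁻¹ := fun n => by simp [f]
  have hneg : ∀ n : ℕ, f (-n) = (a + b * (n : ℝ) ^ 2)⁻¹ := fun n => by simp [f]
  have hsum₁ : Summable fun n : ℕ => f n := by simpa only [hpos] using hsum
  have hsum₂ : Summable fun n : ℕ => f (-n) := by simpa only [hneg] using hsum
  refine ⟨hsum₁.of_nat_of_neg hsum₂, ?_⟩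
  rw [hsum₁.tsum_of_nat_of_neg hsum₂]
  simp only [hpos, hneg]
  have h0 : f 0 = a⁻¹ := by simp [f]
  rw [h0]
  linarith

lemma summable_and_tsum_inv_add_pi_mul_pow_le {m : ℕ} (hm : 0 < m) {M : ℝ} (hM : 1 ≤ M) :
    Summable (fun k : ℤ => (M + (π * k) ^ (2 * m))⁻¹) ∧
      ∑' k : ℤ, (M + (π * k) ^ (2 * m))⁻¹ ≤ 3 / √M := by
  have hM0 : 0 < M := by linarith
  have hsM : 1 ≤ √M := Real.one_le_sqrt.mpr hM
  obtain ⟨hsum, hle⟩ := summable_and_tsum_int_inv_add_mul_sq_le hM0 (by norm_num : (0 : ℝ) < 9)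
    (by positivity : 0 < √M / 3)
  have hcmp : ∀ k : ℤ, (M + (π * k) ^ (2 * m))⁻¹ ≤ (M + 9 * (k : ℝ) ^ 2)⁻¹ := by
    intro k
    have h9 : 9 * (k : ℝ) ^ 2 ≤ (π * k) ^ 2 := by
      rw [mul_pow]; gcongr; nlinarith [pi_gt_three]
    have hsq : (π * k) ^ 2 ≤ (π * k) ^ (2 * m) := by
      rw [pow_mul]
      rcases eq_or_ne k 0 with rfl | hk
      · simp
      · refine le_self_pow₀ ?_ hm.ne'
        have : (1 : ℝ) ≤ (k : ℝ) ^ 2 := by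
          rw [← sq_abs, ← Int.cast_abs]
          exact one_le_pow₀ (by exact_mod_cast Int.one_le_abs hk)
        nlinarith [pi_gt_three]
    exact inv_anti₀ (by positivity) (by linarith)
  have hnonneg : ∀ k : ℤ, 0 ≤ (M + (π * k) ^ (2 * m))⁻¹ := fun k => by
    have := (even_two_mul m).pow_nonneg (π * k); positivity
  have hsum' := hsum.of_nonneg_of_le hnonneg hcmp
  refine ⟨hsum', (hsum'.tsum_le_tsum hcmp hsum).trans (hle.trans ?_)⟩
  have hMs : M = √M * √M := (mul_self_sqrt hM0.le).symm
  generalize √M = s at hMs hsM ⊢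
  subst hMs
  field_simp
  nlinarith

lemma inv_mul_le_inv_mul_inv_add_inv {a b e : ℝ} (ha : 0 < a) (hb : 0 < b) (he : 0 < e)
    (h : e ≤ max a b) : (a * b)⁻¹ ≤ e⁻¹ * (a⁻¹ + b⁻¹) := by
  rw [mul_inv]
  rcases le_total a b with hab | hab
  · have : b⁻¹ ≤ e⁻¹ := inv_anti₀ he (by rwa [max_eq_right hab] at h)
    nlinarith [inv_pos.mpr ha, inv_pos.mpr hb, inv_pos.mpr he]
  · have : a⁻¹ ≤ e⁻¹ := inv_anti₀ he (by rwa [max_eq_left hab] at h)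
    nlinarith [inv_pos.mpr ha, inv_pos.mpr hb, inv_pos.mpr he]

lemma summable_and_tsum_inv_mul_shift_le {A d : ℤ → ℝ} {E : ℝ} (l : ℤ) (hA : ∀ k, 0 < A k)
    (hAd : ∀ k, A k ≤ 2 * d k) (hE : 0 < E) (hEA : ∀ k, E ≤ max (A k) (A (k - l)))
    (hsum : Summable fun k => (A k)⁻¹) :
    Summable (fun k => (d k * d (k - l))⁻¹) ∧
      ∑' k, (d k * d (k - l))⁻¹ ≤ 8 * E⁻¹ * ∑' k, (A k)⁻¹ := by
  have hd : ∀ k, 0 < d k := fun k => by linarith [hA k, hAd k]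
  have hshift : Summable fun k => (A (k - l))⁻¹ := (Equiv.subRight l).summable_iff.mpr hsum
  have hterm : ∀ k, (d k * d (k - l))⁻¹ ≤ 4 * (E⁻¹ * ((A k)⁻¹ + (A (k - l))⁻¹)) := by
    intro k
    calc (d k * d (k - l))⁻¹ ≤ (A k / 2 * (A (k - l) / 2))⁻¹ := by
          have := hAd k; have := hAd (k - l); have := hA k; have := hA (k - l)
          exact inv_anti₀ (by positivity) (mul_le_mul (by linarith) (by linarith) (by positivity)
            (hd k).le)
      _ = 4 * (A k * A (k - l))⁻¹ := by field_simp; norm_num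
      _ ≤ 4 * (E⁻¹ * ((A k)⁻¹ + (A (k - l))⁻¹)) := by
          gcongr
          exact inv_mul_le_inv_mul_inv_add_inv (hA k) (hA _) hE (hEA k)
  have hmaj : Summable fun k => 4 * (E⁻¹ * ((A k)⁻¹ + (A (k - l))⁻¹)) :=
    ((hsum.add hshift).mul_left _).mul_left _
  have hrow := hmaj.of_nonneg_of_le (fun k => (inv_pos.mpr (mul_pos (hd k) (hd _))).le) hterm
  refine ⟨hrow, (hrow.tsum_le_tsum hterm hmaj).trans_eq ?_⟩
  have htsum_shift : ∑' k, (A (k - l))⁻¹ = ∑' k, (A k)⁻¹ :=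
    (Equiv.subRight l).tsum_eq fun k => (A k)⁻¹
  rw [tsum_mul_left, tsum_mul_left, hsum.tsum_add hshift, htsum_shift]
  ring

lemma rpow_one_sub_mul_rpow_le_max {a b α : ℝ} (ha : 0 ≤ a) (hb : 0 ≤ b) (hα0 : 0 ≤ α)
    (hα1 : α ≤ 1) : a ^ (1 - α) * b ^ α ≤ max a b := by
  have := geom_mean_le_arith_mean2_weighted (sub_nonneg.mpr hα1) hα0 ha hb (sub_add_cancel 1 α)
  nlinarith [le_max_left a b, le_max_right a b]

lemma pow_two_mul_le_of_abs_le {x y : ℝ} (h : |x| ≤ |y|) (m : ℕ) : x ^ (2 * m) ≤ y ^ (2 * m) := by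
  rw [← pow_abs_two_mul x, ← pow_abs_two_mul y]
  exact pow_le_pow_left₀ (abs_nonneg x) h _

lemma add_pi_mul_pow_le_two_mul_diagAbs {m : ℕ} {M : ℝ} {lam : ℂ} (hlam : lam ∈ ExtSet M)
    (k : ℤ) : M + (π * k) ^ (2 * m) ≤ 2 * diagAbs m lam k := by
  have hcast : (k : ℂ) ^ (2 * m) * (π : ℂ) ^ (2 * m) = (((π * k) ^ (2 * m) : ℝ) : ℂ) := by
    push_cast; ring
  have him := Complex.abs_im_le_norm (lam - (((π * k) ^ (2 * m) : ℝ) : ℂ))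
  have hre := Complex.abs_re_le_norm (lam - (((π * k) ^ (2 * m) : ℝ) : ℂ))
  rw [Complex.sub_im, Complex.ofReal_im, sub_zero] at him
  rw [Complex.sub_re, Complex.ofReal_re, abs_sub_comm] at hre
  rw [diagAbs, hcast]
  have : M ≤ |lam.im| - lam.re := by have := hlam.out; linarith
  linarith [le_abs_self ((π * k) ^ (2 * m) - lam.re)]

lemma add_pi_mul_half_pow_le_max (M : ℝ) (m : ℕ) (k l : ℤ) :
    M + (π * l / 2) ^ (2 * m) ≤ max (M + (π * k) ^ (2 * m)) (M + (π * (k - l : ℤ)) ^ (2 * m)) := by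
  have htri : |(l : ℝ)| ≤ |(k : ℝ)| + |((k - l : ℤ) : ℝ)| := by
    push_cast
    simpa using abs_sub (k : ℝ) ((k : ℝ) - l)
  rw [max_add_add_left]
  gcongr
  rcases le_total |(k : ℝ)| |((k - l : ℤ) : ℝ)| with h | h
  · refine le_max_of_le_right (pow_two_mul_le_of_abs_le ?_ m)
    rw [abs_div, abs_mul, abs_mul, abs_of_pos pi_pos, abs_two, mul_div_assoc]
    gcongr; linarith
  · refine le_max_of_le_left (pow_two_mul_le_of_abs_le ?_ m)
    rw [abs_div, abs_mul, abs_mul, abs_of_pos pi_pos, abs_two, mul_div_assoc]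
    gcongr; linarith

lemma inv_add_pi_mul_half_pow_le {α M : ℝ} (hα0 : 0 ≤ α) (hα1 : α ≤ 1) (hM : 1 ≤ M)
    (m : ℕ) (l : ℤ) :
    (M + (π * l / 2) ^ (2 * m))⁻¹ ≤ (4 / π) ^ (2 * m) * M ^ (α - 1) * wt l ^ (2 * -(m * α)) := by
  have hM0 : 0 < M := by linarith
  have hwt : 1 ≤ wt l := by simp [wt]
  have hc : (π / 4) ^ (2 * m) ≤ 1 := pow_le_one₀ (by positivity) (by linarith [pi_le_four])
  have hmax : max M (wt l ^ (2 * m)) * (π / 4) ^ (2 * m) ≤ M + (π * l / 2) ^ (2 * m) := by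
    have hpow : 0 ≤ (π * l / 2) ^ (2 * m) := (even_two_mul m).pow_nonneg _
    rw [max_mul_of_nonneg _ _ (by positivity)]
    refine max_le ((mul_le_of_le_one_right hM0.le hc).trans (le_add_of_nonneg_right hpow)) ?_
    rcases eq_or_ne l 0 with rfl | hl
    · simp only [wt, Int.cast_zero, abs_zero, add_zero, one_pow, one_mul]
      exact hc.trans (hM.trans (le_add_of_nonneg_right ((even_two_mul m).pow_nonneg _)))
    · rw [← mul_pow]
      refine (pow_two_mul_le_of_abs_le ?_ m).trans (le_add_of_nonneg_left hM0.le)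
      have hl1 : 1 ≤ |(l : ℝ)| := by exact_mod_cast Int.one_le_abs hl
      rw [abs_of_pos (by unfold wt; positivity : 0 < wt l * (π / 4)), abs_div, abs_mul,
        abs_of_pos pi_pos, abs_two, wt]
      have : (1 + |(l : ℝ)|) * (π / 4) ≤ (2 * |(l : ℝ)|) * (π / 4) := by
        gcongr; linarith
      linarith
  have hinterp := rpow_one_sub_mul_rpow_le_max hM0.le (by positivity : 0 ≤ wt l ^ (2 * m)) hα0 hα1
  have hw : (wt l ^ (2 * m)) ^ α = (wt l ^ (2 * -(m * α)))⁻¹ := by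
    rw [← rpow_natCast, ← rpow_mul (by positivity), show 2 * -(m * α) = -((2 * m : ℕ) * α) by
      push_cast; ring, rpow_neg (by positivity), inv_inv]
  have hMα : M ^ (1 - α) = (M ^ (α - 1))⁻¹ := by
    rw [← rpow_neg hM0.le, neg_sub]
  rw [hw, hMα] at hinterp
  have h1 : 0 < M ^ (α - 1) := rpow_pos_of_pos hM0 _
  have h2 : 0 < wt l ^ (2 * -(m * α)) := rpow_pos_of_pos (by linarith) _
  calc (M + (π * l / 2) ^ (2 * m))⁻¹
      ≤ ((M ^ (α - 1))⁻¹ * (wt l ^ (2 * -(m * α)))⁻¹ * (π / 4) ^ (2 * m))⁻¹ :=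
        inv_anti₀ (by positivity) ((mul_le_mul_of_nonneg_right hinterp (by positivity)).trans hmax)
    _ = (4 / π) ^ (2 * m) * M ^ (α - 1) * wt l ^ (2 * -(m * α)) := by
        rw [mul_inv, mul_inv, inv_inv, inv_inv, ← inv_pow, inv_div]; ring

lemma mul_four_div_pi_pow_le_two_pow_sq {m : ℕ} (hm : 0 < m) :
    24 * (4 / π) ^ (2 * m) ≤ ((2 : ℝ) ^ (2 * m + 1)) ^ 2 := by
  have hπ : 9 ≤ π ^ (2 * m) := by
    calc (9 : ℝ) ≤ π ^ 2 := by nlinarith [pi_gt_three]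
      _ ≤ π ^ (2 * m) := pow_le_pow_right₀ (by linarith [pi_gt_three]) (by omega)
  have h4 : ((2 : ℝ) ^ (2 * m + 1)) ^ 2 = 4 * 4 ^ (2 * m) := by
    rw [← pow_mul, show (2 * m + 1) * 2 = 2 + 2 * (2 * m) by ring, pow_add, pow_mul]
    norm_num
  rw [h4, div_pow, mul_div_assoc', div_le_iff₀ (by positivity)]
  have : (0 : ℝ) < 4 ^ (2 * m) := by positivity
  nlinarith

lemma summable_and_tsum_inv_diagAbs_mul_shift_le {m : ℕ} (hm : 0 < m) {α M : ℝ} (hα0 : 0 ≤ α)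
    (hα1 : α ≤ 1) (hM : 1 ≤ M) {lam : ℂ} (hlam : lam ∈ ExtSet M) (l : ℤ) :
    Summable (fun k => (diagAbs m lam k * diagAbs m lam (k - l))⁻¹) ∧
      ∑' k, (diagAbs m lam k * diagAbs m lam (k - l))⁻¹ ≤
        wt l ^ (2 * -((m : ℝ) * α)) * (2 ^ (2 * m + 1) * M ^ (-((1 - α) / 2 + 1 / 4))) ^ 2 := by
  have hM0 : 0 < M := by linarith
  have hA : ∀ k : ℤ, 0 < M + (π * k) ^ (2 * m) := fun k => by
    have := (even_two_mul m).pow_nonneg (π * k); positivity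
  have hE : 0 < M + (π * l / 2) ^ (2 * m) := by
    have := (even_two_mul m).pow_nonneg (π * l / 2); positivity
  obtain ⟨hsum, hsum_le⟩ := summable_and_tsum_inv_add_pi_mul_pow_le hm hM
  obtain ⟨hrow, hrow_le⟩ := summable_and_tsum_inv_mul_shift_le l hA
    (add_pi_mul_pow_le_two_mul_diagAbs hlam) hE (add_pi_mul_half_pow_le_max M m · l) hsum
  have hMpow : (M ^ (-((1 - α) / 2 + 1 / 4))) ^ 2 = M ^ (α - 1) / √M := by
    rw [sqrt_eq_rpow, ← rpow_natCast, ← rpow_mul hM0.le, ← rpow_sub hM0]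
    congr 1; push_cast; ring
  have hw : 0 ≤ wt l ^ (2 * -((m : ℝ) * α)) := rpow_nonneg (by unfold wt; positivity) _
  have hMα : 0 ≤ M ^ (α - 1) := rpow_nonneg hM0.le _
  refine ⟨hrow, hrow_le.trans ?_⟩
  calc 8 * (M + (π * l / 2) ^ (2 * m))⁻¹ * ∑' k : ℤ, (M + (π * k) ^ (2 * m))⁻¹
      ≤ 8 * ((4 / π) ^ (2 * m) * M ^ (α - 1) * wt l ^ (2 * -((m : ℝ) * α))) * (3 / √M) := by
        refine mul_le_mul (by gcongr; exact inv_add_pi_mul_half_pow_le hα0 hα1 hM m l) hsum_le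
          (tsum_nonneg fun k => (inv_pos.mpr (hA k)).le) (by positivity)
    _ = wt l ^ (2 * -((m : ℝ) * α)) * (24 * (4 / π) ^ (2 * m) * (M ^ (α - 1) / √M)) := by ring
    _ ≤ wt l ^ (2 * -((m : ℝ) * α)) * (2 ^ (2 * m + 1) * M ^ (-((1 - α) / 2 + 1 / 4))) ^ 2 := by
        rw [mul_pow, hMpow]
        gcongr
        exact mul_four_div_pi_pow_le_two_pow_sq hm

theorem statement3_general (m : ℕ) (hm : 0 < m) (α M : ℝ)
    (hα0 : 0 ≤ α) (hα1 : α ≤ 1) (hM : 1 ≤ M)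
    (v : ℤ → ℂ) (hv : MemHs (-((m : ℝ) * α)) v) :
    ∀ lam ∈ ExtSet M,
      Real.sqrt (∑' p : ℤ × ℤ, ‖v (p.1 - p.2)‖ ^ 2 / (diagAbs m lam p.1 * diagAbs m lam p.2))
        ≤ 2 ^ (2 * m + 1) * hsNorm (-((m : ℝ) * α)) v * M ^ (-((1 - α) / 2 + 1 / 4)) ∧
      MatOpNormLE (Smat m v lam)
        (2 ^ (2 * m + 1) * hsNorm (-((m : ℝ) * α)) v * M ^ (-((1 - α) / 2 + 1 / 4))) := by
  intro lam hlam
  have hd : ∀ k, 0 < diagAbs m lam k := fun k => by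
    have := (even_two_mul m).pow_nonneg (π * k)
    linarith [add_pi_mul_pow_le_two_mul_diagAbs (m := m) hlam k]
  obtain ⟨hsum, hsum_le⟩ := summable_and_tsum_sq_div_mul_le hd
    (summable_and_tsum_inv_diagAbs_mul_shift_le hm hα0 hα1 hM hlam) hv
  set c := 2 ^ (2 * m + 1) * hsNorm (-((m : ℝ) * α)) v * M ^ (-((1 - α) / 2 + 1 / 4))
  have hc : 0 ≤ c := by unfold c hsNorm; positivity
  have hsum_le' : ∑' p : ℤ × ℤ, ‖v (p.1 - p.2)‖ ^ 2 / (diagAbs m lam p.1 * diagAbs m lam p.2)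
      ≤ c ^ 2 := by
    have hnorm : hsNorm (-((m : ℝ) * α)) v ^ 2 = ∑' l, wt l ^ (2 * -((m : ℝ) * α)) * ‖v l‖ ^ 2 :=
      sq_sqrt (tsum_nonneg fun l => mul_nonneg (rpow_nonneg (by unfold wt; positivity) _)
        (sq_nonneg _))
    refine hsum_le.trans_eq ?_
    rw [← hnorm]
    ring
  have hSmat : ∀ p : ℤ × ℤ, ‖Smat m v lam p.1 p.2‖ ^ 2 =
      ‖v (p.1 - p.2)‖ ^ 2 / (diagAbs m lam p.1 * diagAbs m lam p.2) := fun p => by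
    rw [Smat, norm_div, Complex.norm_real, Real.norm_of_nonneg (by positivity), div_pow, mul_pow,
      sq_sqrt (hd _).le, sq_sqrt (hd _).le]
  refine ⟨(sqrt_le_sqrt hsum_le').trans_eq (sqrt_sq hc), ?_⟩
  simp only [← hSmat] at hsum hsum_le'
  exact matOpNormLE_of_tsum_sq_le hc hsum hsum_le'

theorem statement3 (m : ℕ) (hm : 0 < m) (α M : ℝ)
    (hα0 : 0 ≤ α) (hα1 : α ≤ 1) (hM : 1 ≤ M)
    (v : ℤ → ℂ) (hv : MemHs (-((m : ℝ) * α)) v) (hv0 : v 0 = 0) :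
    ∀ lam ∈ ExtSet M,
      Real.sqrt (∑' p : ℤ × ℤ, ‖v (p.1 - p.2)‖ ^ 2 / (diagAbs m lam p.1 * diagAbs m lam p.2))
        ≤ 2 ^ (2 * m + 1) * hsNorm (-((m : ℝ) * α)) v * M ^ (-((1 - α) / 2 + 1 / 4)) ∧
      MatOpNormLE (Smat m v lam)
        (2 ^ (2 * m + 1) * hsNorm (-((m : ℝ) * α)) v * M ^ (-((1 - α) / 2 + 1 / 4))) :=
  statement3_general m hm α M hα0 hα1 hM v hv
end
end

section
/- Let m ∈ ℕ, 0 ≤ α ≤ 1, and n ∈ ℕ with n ≥ m. Then for every k ∈ ℤ with k ≠ n and k ≠ −n, one has ⟨k⟩^{mα}/|k^{2m} − n^{2m}|^{1/2} ≤ 3^{mα} · n^{m(α−1+1/(2m))}, where ⟨k⟩ := 1+|k|. -/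
/-!
Put `J = |k|`, `N = n`, `D = |J^{2m} - N^{2m}|` and `t = mα ∈ [0, m]`. Since `t ≤ m`,
`(1 + J)^t ≤ (3N)^{t-m} · max(1 + J, 3N)^m`, so it suffices that
`max(1 + J, 3N)^{2m} ≤ 9^m · N · D`. If `1 + J ≤ 3N` this follows from
`D ≥ N^{2m-1} |J - N| ≥ N^{2m-1}`, the gap `|J - N|` being a nonzero integer. Otherwise `J ≥ 3N`,
and `(1 + J)^{2m} ≤ (2J)^{2m} ≤ (3J)^{2m} - J^{2m} ≤ (3J)^{2m} - (3N)^{2m} = 9^m (J^{2m} - N^{2m})`.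
-/

open scoped BigOperators
noncomputable section

lemma pow_mul_abs_sub_le_abs_pow_succ_sub_pow_succ {a b : ℝ} (ha : 0 ≤ a) (hb : 0 ≤ b) (p : ℕ) :
    b ^ p * |a - b| ≤ |a ^ (p + 1) - b ^ (p + 1)| := by
  rcases le_total b a with hba | hab
  · have : b ^ p ≤ a ^ p := pow_le_pow_left₀ hb hba p
    rw [abs_of_nonneg (sub_nonneg.2 hba),
      abs_of_nonneg (sub_nonneg.2 (pow_le_pow_left₀ hb hba _)), pow_succ, pow_succ]
    nlinarith
  · rw [abs_of_nonpos (sub_nonpos.2 hab),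
      abs_of_nonpos (sub_nonpos.2 (pow_le_pow_left₀ ha hab _)), pow_succ, pow_succ]
    nlinarith [pow_nonneg ha p, pow_le_pow_left₀ ha hab p]

lemma max_one_add_three_mul_pow_le {m : ℕ} (hm : 0 < m) {j n : ℕ} (hn : 0 < n) (hj : j ≠ n) :
    max (1 + (j : ℝ)) (3 * n) ^ (2 * m) ≤ 9 ^ m * (n * |(j : ℝ) ^ (2 * m) - (n : ℝ) ^ (2 * m)|) := by
  have hN : (1 : ℝ) ≤ n := by exact_mod_cast hn
  have h9 : (9 : ℝ) ^ m = 3 ^ (2 * m) := by rw [pow_mul]; norm_num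
  rcases le_or_gt (j + 1) (3 * n) with hnear | hfar
  · have hmax : max (1 + (j : ℝ)) (3 * n) = 3 * n :=
      max_eq_right (by exact_mod_cast (by omega : 1 + j ≤ 3 * n))
    obtain ⟨p, hp⟩ : ∃ p, 2 * m = p + 1 := ⟨2 * m - 1, by omega⟩
    have hgap : (1 : ℝ) ≤ |(j : ℝ) - n| := by
      have : (1 : ℤ) ≤ |(j : ℤ) - n| := Int.one_le_abs (by omega)
      exact_mod_cast this
    have hpow := pow_mul_abs_sub_le_abs_pow_succ_sub_pow_succ (j.cast_nonneg' (α := ℝ))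
      (n.cast_nonneg' (α := ℝ)) p
    rw [hmax, mul_pow, ← h9, hp]
    gcongr
    calc (n : ℝ) ^ (p + 1) = n * n ^ p := pow_succ' _ _
      _ ≤ n * |(j : ℝ) ^ (p + 1) - (n : ℝ) ^ (p + 1)| := by
        gcongr
        nlinarith [pow_nonneg (n.cast_nonneg' (α := ℝ)) p]
  · have hJ : 3 * (n : ℝ) ≤ j := by exact_mod_cast (by omega : 3 * n ≤ j)
    have hmax : max (1 + (j : ℝ)) (3 * n) = 1 + j := max_eq_left (by linarith)
    have hsum : (2 * (j : ℝ)) ^ (2 * m) + (j : ℝ) ^ (2 * m) ≤ (3 * j) ^ (2 * m) := by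
      have := pow_add_pow_le (by positivity : (0 : ℝ) ≤ 2 * j) (j.cast_nonneg' (α := ℝ))
        (by omega : 2 * m ≠ 0)
      rwa [show 2 * (j : ℝ) + j = 3 * j by ring] at this
    have h1 : (1 + (j : ℝ)) ^ (2 * m) ≤ (2 * j) ^ (2 * m) := by gcongr; linarith
    have h3 : (3 * (n : ℝ)) ^ (2 * m) ≤ (j : ℝ) ^ (2 * m) := by gcongr
    rw [hmax]
    calc (1 + (j : ℝ)) ^ (2 * m) ≤ 9 ^ m * (j ^ (2 * m) - n ^ (2 * m)) := by
          rw [h9, mul_sub, ← mul_pow, ← mul_pow]; linarith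
      _ ≤ 9 ^ m * (n * |(j : ℝ) ^ (2 * m) - (n : ℝ) ^ (2 * m)|) := by
          gcongr
          exact (le_abs_self _).trans (le_mul_of_one_le_left (abs_nonneg _) hN)

lemma rpow_le_rpow_sub_mul_max_rpow {x y t s : ℝ} (hx : 0 < x) (hy : 0 < y) (ht : 0 ≤ t)
    (hts : t ≤ s) : x ^ t ≤ y ^ (t - s) * max x y ^ s := by
  rcases le_total x y with hxy | hyx
  · rw [max_eq_right hxy, ← Real.rpow_add hy, sub_add_cancel]
    exact Real.rpow_le_rpow hx.le hxy ht
  · rw [max_eq_left hyx]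
    calc x ^ t = x ^ (t - s) * x ^ s := by rw [← Real.rpow_add hx, sub_add_cancel]
      _ ≤ y ^ (t - s) * x ^ s := by
        have : x ^ (t - s) ≤ y ^ (t - s) := Real.rpow_le_rpow_of_nonpos hy hyx (by linarith)
        gcongr

lemma one_add_rpow_div_sqrt_le {m : ℕ} (hm : 0 < m) {j n : ℕ} (hn : 0 < n) (hj : j ≠ n)
    {t : ℝ} (ht : 0 ≤ t) (htm : t ≤ m) :
    (1 + (j : ℝ)) ^ t / √|(j : ℝ) ^ (2 * m) - (n : ℝ) ^ (2 * m)|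
      ≤ 3 ^ t * (n : ℝ) ^ (t - m + 1 / 2) := by
  set D := |(j : ℝ) ^ (2 * m) - (n : ℝ) ^ (2 * m)|
  have hN : (0 : ℝ) < n := by exact_mod_cast hn
  have hbound := max_one_add_three_mul_pow_le hm hn hj
  have hD : 0 < D := by
    have : 0 < max (1 + (j : ℝ)) (3 * n) ^ (2 * m) := by positivity
    exact pos_of_mul_pos_right (pos_of_mul_pos_right (this.trans_le hbound) (by positivity)) hN.le
  have hmax : max (1 + (j : ℝ)) (3 * n) ^ (m : ℝ) ≤ 3 ^ m * √(n * D) := by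
    have h9 : ((3 : ℝ) ^ m) ^ 2 = 9 ^ m := by rw [← pow_mul, mul_comm, pow_mul]; norm_num
    rwa [Real.rpow_natCast, ← pow_le_pow_iff_left₀ (by positivity) (by positivity) two_ne_zero,
      mul_pow, h9, Real.sq_sqrt (by positivity), ← pow_mul, mul_comm m 2]
  rw [div_le_iff₀ (Real.sqrt_pos.2 hD)]
  calc (1 + (j : ℝ)) ^ t ≤ (3 * n) ^ (t - m) * max (1 + (j : ℝ)) (3 * n) ^ (m : ℝ) :=
        rpow_le_rpow_sub_mul_max_rpow (by positivity) (by positivity) ht htm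
    _ ≤ (3 * n) ^ (t - m) * (3 ^ m * √(n * D)) := by gcongr
    _ = 3 ^ t * (n : ℝ) ^ (t - m + 1 / 2) * √D := by
        have h3 : (3 : ℝ) ^ t = 3 ^ (t - m) * 3 ^ m := by
          rw [← Real.rpow_natCast, ← Real.rpow_add (by norm_num), sub_add_cancel]
        rw [Real.mul_rpow (by norm_num) hN.le, Real.sqrt_mul hN.le, Real.sqrt_eq_rpow,
          Real.rpow_add hN, h3]
        ring

theorem statement5 (m : ℕ) (hm : 0 < m) (α : ℝ) (hα0 : 0 ≤ α) (hα1 : α ≤ 1)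
    (n : ℕ) (hn : m ≤ n) :
    ∀ k : ℤ, k ≠ (n : ℤ) → k ≠ -(n : ℤ) →
      wt k ^ ((m : ℝ) * α) / Real.sqrt |(k : ℝ) ^ (2 * m) - (n : ℝ) ^ (2 * m)|
        ≤ (3 : ℝ) ^ ((m : ℝ) * α) * (n : ℝ) ^ ((m : ℝ) * (α - 1 + 1 / (2 * (m : ℝ)))) := by
  intro k hkn hkn'
  have hwt : wt k = 1 + (k.natAbs : ℝ) := by rw [wt, Nat.cast_natAbs, Int.cast_abs]
  have hpow : (k : ℝ) ^ (2 * m) = (k.natAbs : ℝ) ^ (2 * m) := by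
    rw [Nat.cast_natAbs, Int.cast_abs, (even_two_mul m).pow_abs]
  have hexp : (m : ℝ) * (α - 1 + 1 / (2 * m)) = m * α - m + 1 / 2 := by
    field_simp
  rw [hwt, hpow, hexp]
  exact one_add_rpow_div_sqrt_le hm (by omega) (by omega) (by positivity)
    (mul_le_of_le_one_right m.cast_nonneg hα1)
end
end

section
/- Let m ∈ ℕ, 0 ≤ α ≤ 1, and n ∈ ℕ with n ≥ m. Then for every k ∈ ℤ with k ≠ n and k ≠ −n, and for either choice of sign, one has ⟨k ± n⟩^{mα}/|k^{2m} − n^{2m}|^{1/2} ≤ 4^{mα} · n^{m(α−1+1/(2m))}, where ⟨k⟩ := 1+|k|. -/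
open scoped BigOperators
noncomputable section

/-! Write `x = |k|`, `ν = n` and `A = |k^{2m} - n^{2m}|`; since `k ≠ ±n` are integers, `|x - ν| ≥ 1`.
Factoring gives `A ≥ |x - ν| · max(x, ν)^{2m-1}`, and together with `⟨k ± n⟩ ≤ 1 + x + ν ≤ 2 max(x, ν)`
and `max(x, ν) ≤ 2ν|x - ν|` this yields `ν^{2m} ≤ νA` and `⟨k ± n⟩^{2m} ≤ 4^{2m} νA`.
So `X = ⟨k ± n⟩ / (4ν)` satisfies `X^{2m} ≤ D := νA / ν^{2m}` with `D ≥ 1`, hence `X^β ≤ √D` for every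
`0 ≤ β ≤ m` (compare with `1` if `X ≤ 1` and with `X^m` otherwise); for `β = mα` this is the claim. -/

open Real

lemma sub_mul_pow_le_pow_succ_sub_pow_succ {a b : ℝ} (ha : 0 ≤ a) (hab : a ≤ b) (p : ℕ) :
    (b - a) * b ^ p ≤ b ^ (p + 1) - a ^ (p + 1) := by
  have : a * a ^ p ≤ a * b ^ p := mul_le_mul_of_nonneg_left (pow_le_pow_left₀ ha hab p) ha
  rw [pow_succ', pow_succ']
  linarith

lemma abs_sub_mul_max_pow_le {x y : ℝ} (hx : 0 ≤ x) (hy : 0 ≤ y) (p : ℕ) :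
    |x - y| * max x y ^ p ≤ |x ^ (p + 1) - y ^ (p + 1)| := by
  rcases le_total x y with h | h
  · rw [max_eq_right h, abs_sub_comm, abs_of_nonneg (sub_nonneg.2 h), abs_sub_comm,
      abs_of_nonneg (sub_nonneg.2 (pow_le_pow_left₀ hx h _))]
    exact sub_mul_pow_le_pow_succ_sub_pow_succ hx h p
  · rw [max_eq_left h, abs_of_nonneg (sub_nonneg.2 h),
      abs_of_nonneg (sub_nonneg.2 (pow_le_pow_left₀ hy h _))]
    exact sub_mul_pow_le_pow_succ_sub_pow_succ hy h p

lemma one_add_add_le_two_mul_max {x y : ℝ} (h : 1 ≤ |x - y|) : 1 + x + y ≤ 2 * max x y := by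
  rcases le_abs'.1 h with h | h
  · linarith [le_max_right x y]
  · linarith [le_max_left x y]

lemma max_le_two_mul_mul_abs_sub {x y : ℝ} (hy : 1 ≤ y) (h : 1 ≤ |x - y|) :
    max x y ≤ 2 * y * |x - y| := by
  rcases le_total x y with hxy | hxy
  · rw [max_eq_right hxy]
    nlinarith
  · rw [max_eq_left hxy]
    rw [abs_of_nonneg (sub_nonneg.2 hxy)] at h ⊢
    nlinarith

lemma abs_pow_sub_pow_lower_bounds {x y : ℝ} (hx : 0 ≤ x) (hy : 1 ≤ y) (h : 1 ≤ |x - y|)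
    {p : ℕ} (hp : p ≠ 0) :
    y ^ p ≤ y * |x ^ p - y ^ p| ∧ (1 + x + y) ^ p ≤ 4 ^ p * y * |x ^ p - y ^ p| := by
  obtain ⟨q, rfl⟩ := Nat.exists_eq_succ_of_ne_zero hp
  have hM : |x - y| * max x y ^ q ≤ |x ^ (q + 1) - y ^ (q + 1)| :=
    abs_sub_mul_max_pow_le hx (by linarith) q
  have hMq : 0 ≤ max x y ^ q := pow_nonneg (le_max_of_le_left hx) q
  have hyq : y ^ q ≤ max x y ^ q := pow_le_pow_left₀ (by linarith) (le_max_right x y) q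
  constructor
  · calc y ^ (q + 1) = y * y ^ q := pow_succ' y q
      _ ≤ y * (|x - y| * max x y ^ q) := by gcongr; nlinarith
      _ ≤ y * |x ^ (q + 1) - y ^ (q + 1)| := by gcongr
  · calc (1 + x + y) ^ (q + 1) ≤ (2 * max x y) ^ (q + 1) := by
          gcongr
          exact one_add_add_le_two_mul_max h
      _ = 2 ^ (q + 1) * max x y * max x y ^ q := by ring
      _ ≤ 2 ^ (q + 1) * (2 * y * |x - y|) * max x y ^ q := by
          gcongr; exact max_le_two_mul_mul_abs_sub hy h
      _ = 2 ^ (q + 2) * y * (|x - y| * max x y ^ q) := by ring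
      _ ≤ 4 ^ (q + 1) * y * |x ^ (q + 1) - y ^ (q + 1)| := by
          gcongr
          calc (2 : ℝ) ^ (q + 2) ≤ 2 ^ (2 * (q + 1)) := pow_le_pow_right₀ one_le_two (by omega)
            _ = 4 ^ (q + 1) := by rw [pow_mul]; norm_num

lemma rpow_le_sqrt_of_pow_le {X D β : ℝ} {m : ℕ} (hX : 0 ≤ X) (hβ0 : 0 ≤ β) (hβm : β ≤ m)
    (hD : 1 ≤ D) (hXD : X ^ (2 * m) ≤ D) : X ^ β ≤ √D := by
  rcases le_total X 1 with h | h
  · exact (rpow_le_one hX h hβ0).trans (one_le_sqrt.2 hD)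
  · calc X ^ β ≤ X ^ (m : ℝ) := rpow_le_rpow_of_exponent_le h hβm
      _ = √(X ^ (2 * m)) := by
          rw [rpow_natCast, mul_comm, pow_mul, sqrt_sq (pow_nonneg hX m)]
      _ ≤ √D := sqrt_le_sqrt hXD

lemma rpow_div_sqrt_le (m : ℕ) {β ν w A : ℝ} (hβ0 : 0 ≤ β) (hβm : β ≤ m) (hν : 0 < ν)
    (hw : 0 ≤ w) (hA₁ : ν ^ (2 * m) ≤ ν * A) (hA₂ : w ^ (2 * m) ≤ 4 ^ (2 * m) * ν * A) :
    w ^ β / √A ≤ 4 ^ β * ν ^ (β - m + 1 / 2) := by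
  have hνm : 0 < ν ^ (2 * m) := pow_pos hν _
  have hA : 0 < A := pos_of_mul_pos_right (hνm.trans_le hA₁) hν.le
  have hX : (w / (4 * ν)) ^ β ≤ √(ν * A / ν ^ (2 * m)) := by
    refine rpow_le_sqrt_of_pow_le (by positivity) hβ0 hβm ((one_le_div hνm).2 hA₁) ?_
    rw [div_pow, mul_pow, div_le_div_iff₀ (by positivity) hνm]
    calc w ^ (2 * m) * ν ^ (2 * m) ≤ 4 ^ (2 * m) * ν * A * ν ^ (2 * m) := by gcongr
      _ = ν * A * (4 ^ (2 * m) * ν ^ (2 * m)) := by ring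
  have hw_eq : w ^ β = (4 * ν) ^ β * (w / (4 * ν)) ^ β := by
    rw [← mul_rpow (by positivity) (by positivity), mul_div_cancel₀ _ (by positivity)]
  have hsqrt : √(ν * A / ν ^ (2 * m)) = ν ^ (1 / 2 - (m : ℝ)) * √A := by
    rw [sqrt_div' _ hνm.le, sqrt_mul hν.le, pow_mul', sqrt_sq (by positivity), sqrt_eq_rpow,
      rpow_sub hν, rpow_natCast]
    ring
  rw [div_le_iff₀ (sqrt_pos.2 hA), hw_eq]
  calc (4 * ν) ^ β * (w / (4 * ν)) ^ β ≤ (4 * ν) ^ β * √(ν * A / ν ^ (2 * m)) := by gcongr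
    _ = 4 ^ β * ν ^ (β - m + 1 / 2) * √A := by
      rw [hsqrt, mul_rpow (by norm_num) hν.le, add_comm_sub, rpow_add hν]
      ring

lemma wt_add_le (a b : ℤ) : wt (a + b) ≤ 1 + |(a : ℝ)| + |(b : ℝ)| := by
  unfold wt
  push_cast
  linarith [abs_add_le (a : ℝ) b]

theorem statement6 (m : ℕ) (hm : 0 < m) (α : ℝ) (hα0 : 0 ≤ α) (hα1 : α ≤ 1)
    (n : ℕ) (hn : m ≤ n) :
    ∀ k : ℤ, k ≠ (n : ℤ) → k ≠ -(n : ℤ) →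
      wt (k + (n : ℤ)) ^ ((m : ℝ) * α) / Real.sqrt |(k : ℝ) ^ (2 * m) - (n : ℝ) ^ (2 * m)|
        ≤ (4 : ℝ) ^ ((m : ℝ) * α) * (n : ℝ) ^ ((m : ℝ) * (α - 1 + 1 / (2 * (m : ℝ)))) ∧
      wt (k - (n : ℤ)) ^ ((m : ℝ) * α) / Real.sqrt |(k : ℝ) ^ (2 * m) - (n : ℝ) ^ (2 * m)|
        ≤ (4 : ℝ) ^ ((m : ℝ) * α) * (n : ℝ) ^ ((m : ℝ) * (α - 1 + 1 / (2 * (m : ℝ)))) := by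
  intro k hkn hkn'
  have hn₁ : (1 : ℝ) ≤ n := by exact_mod_cast hm.trans_le hn
  have hgap : 1 ≤ |(|(k : ℝ)|) - n| := by
    have : |k| - (n : ℤ) ≠ 0 := by rcases abs_choice k with h | h <;> omega
    exact_mod_cast Int.one_le_abs this
  obtain ⟨hA₁, hA₂⟩ := abs_pow_sub_pow_lower_bounds (abs_nonneg (k : ℝ)) hn₁ hgap
    (by omega : 2 * m ≠ 0)
  have key : ∀ j : ℤ, |(j : ℝ)| = n → wt (k + j) ^ ((m : ℝ) * α) /
      √|(k : ℝ) ^ (2 * m) - (n : ℝ) ^ (2 * m)| ≤ 4 ^ ((m : ℝ) * α) * n ^ (m * α - m + 1 / 2) := by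
    intro j hj
    rw [← Even.pow_abs ⟨m, two_mul m⟩ (k : ℝ)]
    refine rpow_div_sqrt_le m (by positivity) (mul_le_of_le_one_right m.cast_nonneg hα1)
      (by positivity) (by unfold wt; positivity) hA₁ (le_trans ?_ hA₂)
    gcongr
    · unfold wt; positivity
    · exact hj ▸ wt_add_le k j
  have hexp : (m : ℝ) * (α - 1 + 1 / (2 * m)) = m * α - m + 1 / 2 := by
    field_simp
  rw [hexp, sub_eq_add_neg]
  exact ⟨key n (by simp), key (-n) (by simp)⟩
end
end

section
/- Let m ∈ ℕ, n ∈ ℕ with n ≥ (8m−4)m/(8m−7), and 0 < r < n^m π^{2m}. Then for every λ ∈ Vert^m_n(r) and every k ∈ ℤ with k ≠ ±n, one has 1/|λ − k^{2m}π^{2m}| ≤ 3/(π^{2m}·|k^{2m} − n^{2m}|). -/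
open scoped BigOperators
noncomputable section

/-!
Write `a = |k|^m` and `b = n^m`; these are distinct naturals and `b ≥ 2`, so
`|a² - b²| = |a - b| (a + b) ≥ 3b/2`. Since `Re λ` stays within `b π^{2m}` of `n^{2m} π^{2m}`,
`|λ - k^{2m} π^{2m}| ≥ π^{2m} (|a² - b²| - b) ≥ π^{2m} |a² - b²| / 3`.
-/

lemma two_le_of_threshold_le {m n : ℕ} (hm : 0 < m)
    (hn : ((8 * (m : ℝ) - 4) * m) / (8 * m - 7) ≤ n) : 2 ≤ n := by
  have hm1 : (1 : ℝ) ≤ m := by exact_mod_cast hm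
  have hthreshold : (1 : ℝ) < ((8 * (m : ℝ) - 4) * m) / (8 * m - 7) := by
    rw [lt_div_iff₀ (by linarith)]
    nlinarith
  exact_mod_cast hthreshold.trans_le hn

lemma three_halves_mul_le_abs_sq_sub_sq {a b : ℝ} (ha : 0 ≤ a) (hb : 2 ≤ b)
    (hab : 1 ≤ |a - b|) : 3 / 2 * b ≤ |a ^ 2 - b ^ 2| := by
  have hfactor : |a ^ 2 - b ^ 2| = |a - b| * (a + b) := by
    rw [show a ^ 2 - b ^ 2 = (a - b) * (a + b) by ring, abs_mul,
      abs_of_nonneg (show 0 ≤ a + b by linarith)]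
  rcases le_total (b / 2) a with h | h
  · rw [hfactor]
    nlinarith
  · rw [abs_of_nonpos (by nlinarith)]
    nlinarith

lemma three_halves_mul_pow_le_abs_pow_sub_pow {m n : ℕ} (hm : m ≠ 0) (hn : 2 ≤ n) {k : ℤ}
    (hkn : k ≠ n) (hkn' : k ≠ -n) :
    3 / 2 * (n : ℝ) ^ m ≤ |(k : ℝ) ^ (2 * m) - (n : ℝ) ^ (2 * m)| := by
  have hne : k.natAbs ^ m ≠ n ^ m := by
    intro h
    rcases Int.natAbs_eq_iff.mp (Nat.pow_left_injective hm h) with h | h <;> contradiction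
  have hsep : (1 : ℝ) ≤ |((k.natAbs ^ m : ℕ) : ℝ) - ((n ^ m : ℕ) : ℝ)| := by
    have h : ((k.natAbs ^ m : ℕ) : ℤ) - ((n ^ m : ℕ) : ℤ) ≠ 0 :=
      sub_ne_zero.mpr (by exact_mod_cast hne)
    exact_mod_cast Int.one_le_abs h
  have hb : (2 : ℝ) ≤ ((n ^ m : ℕ) : ℝ) := by
    exact_mod_cast (Nat.le_self_pow hm 2).trans (Nat.pow_le_pow_left hn m)
  have h := three_halves_mul_le_abs_sq_sub_sq (Nat.cast_nonneg _) hb hsep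
  rwa [Nat.cast_pow, Nat.cast_pow, Nat.cast_natAbs, Int.cast_abs, ← pow_mul, ← pow_mul,
    mul_comm m 2, Even.pow_abs (even_two_mul m)] at h

lemma abs_sub_sub_le_norm_sub_of_abs_re_sub_le {lam : ℂ} {μ ν b : ℝ}
    (h : |(lam - μ).re| ≤ b) : |μ - ν| - b ≤ ‖lam - ν‖ := by
  have hre : (lam - ν).re = (lam - μ).re + (μ - ν) := by
    simp only [Complex.sub_re, Complex.ofReal_re]
    ring
  have := abs_sub_abs_le_abs_sub (μ - ν) (-(lam - μ).re)
  rw [abs_neg, sub_neg_eq_add, add_comm, ← hre] at this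
  linarith [Complex.abs_re_le_norm (lam - ν)]

theorem statement8_general (m : ℕ) (hm : 0 < m)
    (n : ℕ) (hn : ((8 * (m : ℝ) - 4) * m) / (8 * m - 7) ≤ n)
    (r : ℝ) :
    ∀ lam ∈ VertSet m n r, ∀ k : ℤ, k ≠ (n : ℤ) → k ≠ -(n : ℤ) →
      1 / diagAbs m lam k ≤ 3 / (Real.pi ^ (2 * m) * |(k : ℝ) ^ (2 * m) - (n : ℝ) ^ (2 * m)|) := by
  rintro lam ⟨hre, -⟩ k hkn hkn'
  have hn2 := two_le_of_threshold_le hm hn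
  have hD := three_halves_mul_pow_le_abs_pow_sub_pow hm.ne' hn2 hkn hkn'
  set D := |(k : ℝ) ^ (2 * m) - (n : ℝ) ^ (2 * m)|
  have hπ : 0 < Real.pi ^ (2 * m) := by positivity
  have hlower : Real.pi ^ (2 * m) * D - (n : ℝ) ^ m * Real.pi ^ (2 * m) ≤ diagAbs m lam k := by
    have h := abs_sub_sub_le_norm_sub_of_abs_re_sub_le (lam := lam)
      (μ := (n : ℝ) ^ (2 * m) * Real.pi ^ (2 * m)) (ν := (k : ℝ) ^ (2 * m) * Real.pi ^ (2 * m))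
      (by push_cast; exact hre)
    rw [← sub_mul, abs_mul, abs_of_pos hπ, abs_sub_comm, mul_comm] at h
    push_cast at h
    exact h
  have hpos : 0 < Real.pi ^ (2 * m) * D / 3 := by
    have : 0 < D := lt_of_lt_of_le (by positivity) hD
    positivity
  calc 1 / diagAbs m lam k ≤ 1 / (Real.pi ^ (2 * m) * D / 3) :=
        one_div_le_one_div_of_le hpos (by nlinarith)
    _ = 3 / (Real.pi ^ (2 * m) * D) := one_div_div _ _

theorem statement8 (m : ℕ) (hm : 0 < m)
    (n : ℕ) (hn : ((8 * (m : ℝ) - 4) * m) / (8 * m - 7) ≤ n)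
    (r : ℝ) (hr0 : 0 < r) (hr1 : r < (n : ℝ) ^ m * Real.pi ^ (2 * m)) :
    ∀ lam ∈ VertSet m n r, ∀ k : ℤ, k ≠ (n : ℤ) → k ≠ -(n : ℤ) →
      1 / diagAbs m lam k ≤ 3 / (Real.pi ^ (2 * m) * |(k : ℝ) ^ (2 * m) - (n : ℝ) ^ (2 * m)|) :=
  statement8_general m hm n hn r
end
end

section
/- Let m ∈ ℕ and M ≥ 1. Then for every λ ∈ Ext_M and every k ∈ ℤ, one has |λ − k^{2m}π^{2m}| ≥ (M + k^{2m}π^{2m})·sin(π/4). -/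
open scoped BigOperators
noncomputable section

/-! With `z = λ - k^{2m}π^{2m}`, membership in `Ext_M` says exactly
`M + k^{2m}π^{2m} ≤ |Im z| - Re z`, and `|Im z| - Re z ≤ |Re z| + |Im z| ≤ √2 ‖z‖`. -/

theorem Complex.abs_re_add_abs_im_le_sqrt_two_mul_norm (z : ℂ) :
    |z.re| + |z.im| ≤ √2 * ‖z‖ := by
  rw [Complex.norm_def, ← Real.sqrt_mul zero_le_two, Complex.normSq_apply]
  apply Real.le_sqrt_of_sq_le
  nlinarith [sq_nonneg (|z.re| - |z.im|), sq_abs z.re, sq_abs z.im]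

theorem mul_sin_pi_div_four_le_norm_sub_of_mem_extSet {M : ℝ} {lam : ℂ} (hlam : lam ∈ ExtSet M)
    (μ : ℝ) : (M + μ) * Real.sin (Real.pi / 4) ≤ ‖lam - μ‖ := by
  have hdist : M + μ ≤ |(lam - μ).re| + |(lam - μ).im| := by
    have hre : -(lam - μ).re ≤ |(lam - μ).re| := neg_le_abs _
    simp only [ExtSet, Set.mem_ofPred_eq] at hlam
    simp only [Complex.sub_re, Complex.ofReal_re, Complex.sub_im, Complex.ofReal_im,
      sub_zero] at hre ⊢
    linarith
  have hsqrt : √2 * (√2 / 2) = 1 := by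
    rw [← mul_div_assoc, Real.mul_self_sqrt zero_le_two, div_self two_ne_zero]
  calc (M + μ) * Real.sin (Real.pi / 4)
      ≤ (√2 * ‖lam - μ‖) * (√2 / 2) := by
        rw [Real.sin_pi_div_four]
        gcongr
        exact hdist.trans (Complex.abs_re_add_abs_im_le_sqrt_two_mul_norm _)
    _ = ‖lam - μ‖ := by rw [mul_comm √2, mul_assoc, hsqrt, mul_one]

theorem statement10_general (m : ℕ) (M : ℝ) :
    ∀ lam ∈ ExtSet M, ∀ k : ℤ,
      (M + (k : ℝ) ^ (2 * m) * Real.pi ^ (2 * m)) * Real.sin (Real.pi / 4)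
        ≤ diagAbs m lam k := by
  intro lam hlam k
  have h := mul_sin_pi_div_four_le_norm_sub_of_mem_extSet hlam
    ((k : ℝ) ^ (2 * m) * Real.pi ^ (2 * m))
  rwa [diagAbs, ← Complex.ofReal_intCast, ← Complex.ofReal_pow, ← Complex.ofReal_pow,
    ← Complex.ofReal_mul]

theorem statement10 (m : ℕ) (hm : 0 < m) (M : ℝ) (hM : 1 ≤ M) :
    ∀ lam ∈ ExtSet M, ∀ k : ℤ,
      (M + (k : ℝ) ^ (2 * m) * Real.pi ^ (2 * m)) * Real.sin (Real.pi / 4)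
        ≤ diagAbs m lam k :=
  statement10_general m M
end
end

section
/- Let m ∈ ℕ, 0 ≤ α < 1, and let v ∈ h^{-mα}_0 satisfy v(−k) = conj(v(k)) for all k ∈ ℤ. Then every periodic eigenvalue of v is real, i.e. if λ ∈ ℂ and there exists a nonzero a ∈ h^{m(2−α)} with k^{2m}π^{2m} a(k) + Σ_{j∈ℤ} v(k−j) a(j) = λ a(k) for all k ∈ ℤ, then Im λ = 0. -/
open scoped BigOperators
noncomputable section

/-!
Pairing the eigenvalue equation with `a` gives
`λ ‖a‖² = ∑ k^{2m} π^{2m} |a k|² + ∑_{k,j} conj (a k) v (k - j) a j`.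
The double series is invariant under conjugation followed by `k ↔ j` because
`v (-k) = conj (v k)`, so it is real once it converges absolutely. Absolute convergence follows
from `⟨k - j⟩^t ≤ 2^t (⟨k⟩^t + ⟨j⟩^t)` with `t = mα`: `v ⟨·⟩^{-t}` and `a ⟨·⟩^t` lie in `ℓ²`,
and `a ∈ ℓ¹` because its order `m(2 - α)` exceeds `1/2`.
-/

open ComplexConjugate

lemma wt_pos (k : ℤ) : 0 < wt k := by unfold wt; positivity

lemma one_le_wt (k : ℤ) : 1 ≤ wt k := by unfold wt; linarith [abs_nonneg (k : ℝ)]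

lemma wt_sub_le_add (k j : ℤ) : wt (k - j) ≤ wt k + wt j := by
  unfold wt; push_cast; linarith [abs_sub (k : ℝ) j]

lemma wt_sub_rpow_le {t : ℝ} (ht : 0 ≤ t) (k j : ℤ) :
    wt (k - j) ^ t ≤ 2 ^ t * (wt k ^ t + wt j ^ t) := by
  have hmax : wt (k - j) ≤ 2 * max (wt k) (wt j) :=
    (wt_sub_le_add k j).trans (by linarith [le_max_left (wt k) (wt j), le_max_right (wt k) (wt j)])
  calc wt (k - j) ^ t ≤ (2 * max (wt k) (wt j)) ^ t := by gcongr; exact (wt_pos _).le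
    _ = 2 ^ t * max (wt k) (wt j) ^ t := Real.mul_rpow zero_le_two (le_max_of_le_left (wt_pos k).le)
    _ ≤ 2 ^ t * (wt k ^ t + wt j ^ t) := by
      gcongr
      have := Real.rpow_nonneg (wt_pos k).le t
      have := Real.rpow_nonneg (wt_pos j).le t
      rcases max_cases (wt k) (wt j) with ⟨h, -⟩ | ⟨h, -⟩ <;> rw [h] <;> linarith

lemma summable_wt_rpow_neg {r : ℝ} (hr : 1 < r) : Summable fun k : ℤ => wt k ^ (-r) := by
  refine ((Real.summable_one_div_int_add_rpow (1 / 2) r).mpr hr).of_nonneg_of_le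
    (fun k => Real.rpow_nonneg (wt_pos k).le _) fun k => ?_
  have hk : |(k : ℝ) + 1 / 2| ≤ wt k := by
    unfold wt; linarith [abs_add_le (k : ℝ) (1 / 2), abs_of_pos (one_half_pos : (0 : ℝ) < 1 / 2)]
  have hk0 : 0 < |(k : ℝ) + 1 / 2| := by
    rw [abs_pos]; intro h
    have : (2 * k + 1 : ℝ) = 0 := by linarith
    exact_mod_cast (by omega : 2 * k + 1 ≠ 0) (by exact_mod_cast this)
  rw [Real.rpow_neg (wt_pos k).le, one_div]
  gcongr

lemma wt_rpow_sq (k : ℤ) (r : ℝ) : (wt k ^ r) ^ 2 = wt k ^ (2 * r) := by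
  rw [← Real.rpow_natCast, ← Real.rpow_mul (wt_pos k).le, mul_comm]; norm_num

lemma memHs_iff_summable_sq {s : ℝ} {a : ℤ → ℂ} :
    MemHs s a ↔ Summable fun k => (wt k ^ s * ‖a k‖) ^ 2 := by
  simp only [MemHs, mul_pow, wt_rpow_sq]

lemma MemHs.mono {s s' : ℝ} {a : ℤ → ℂ} (ha : MemHs s a) (hs : s' ≤ s) : MemHs s' a :=
  Summable.of_nonneg_of_le (fun k => mul_nonneg (Real.rpow_nonneg (wt_pos k).le _) (sq_nonneg _))
    (fun k => mul_le_mul_of_nonneg_right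
      (Real.rpow_le_rpow_of_exponent_le (one_le_wt k) (by linarith)) (sq_nonneg _)) ha

lemma MemHs.summable_norm_sq {s : ℝ} {a : ℤ → ℂ} (ha : MemHs s a) (hs : 0 ≤ s) :
    Summable fun k => ‖a k‖ ^ 2 := by
  simpa [MemHs] using ha.mono hs

lemma Summable.mul_of_summable_sq {ι : Type*} {f g : ι → ℝ} (hf : Summable fun i => f i ^ 2)
    (hg : Summable fun i => g i ^ 2) : Summable fun i => f i * g i :=
  Summable.of_norm_bounded ((hf.add hg).div_const 2) fun i => by
    rw [Real.norm_eq_abs, abs_mul]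
    nlinarith [two_mul_le_add_sq |f i| |g i|, sq_abs (f i), sq_abs (g i)]

lemma MemHs.summable_norm {s : ℝ} {a : ℤ → ℂ} (ha : MemHs s a) (hs : 1 / 2 < s) :
    Summable fun k => ‖a k‖ := by
  have hneg : Summable fun k : ℤ => (wt k ^ (-s)) ^ 2 := by
    simpa only [wt_rpow_sq, mul_neg] using summable_wt_rpow_neg (r := 2 * s) (by linarith)
  refine (hneg.mul_of_summable_sq (memHs_iff_summable_sq.mp ha)).congr fun k => ?_
  rw [← mul_assoc, ← Real.rpow_add (wt_pos k), neg_add_cancel, Real.rpow_zero, one_mul]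

/-- Young's inequality `ℓ² * ℓ¹ ⊆ ℓ²`, paired with a further `ℓ²` sequence. -/
lemma summable_comp_sub_mul_mul {f g h : ℤ → ℝ} (hg0 : ∀ j, 0 ≤ g j)
    (hf : Summable fun l => f l ^ 2) (hg : Summable g) (hh : Summable fun k => h k ^ 2) :
    Summable fun p : ℤ × ℤ => f (p.1 - p.2) * h p.1 * g p.2 := by
  let shear : ℤ × ℤ ≃ ℤ × ℤ :=
    ⟨fun p => (p.1 + p.2, p.2), fun p => (p.1 - p.2, p.2), fun p => by simp, fun p => by simp⟩
  have hfg : Summable fun p : ℤ × ℤ => f (p.1 - p.2) ^ 2 * g p.2 := by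
    refine shear.summable_iff.mp ((hf.mul_of_nonneg hg (fun l => sq_nonneg _) hg0).congr ?_)
    intro p; simp [shear]
  have hhg : Summable fun p : ℤ × ℤ => h p.1 ^ 2 * g p.2 :=
    hh.mul_of_nonneg hg (fun k => sq_nonneg _) hg0
  refine Summable.of_norm_bounded ((hfg.add hhg).div_const 2) fun p => ?_
  have := mul_le_mul_of_nonneg_right (two_mul_le_add_sq |f (p.1 - p.2)| |h p.1|) (hg0 p.2)
  rw [sq_abs, sq_abs] at this
  rw [Real.norm_eq_abs, abs_mul, abs_mul, abs_of_nonneg (hg0 _)]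
  linarith

lemma summable_comp_sub_mul_mul' {f g h : ℤ → ℝ} (hg0 : ∀ j, 0 ≤ g j)
    (hf : Summable fun l => f l ^ 2) (hg : Summable g) (hh : Summable fun k => h k ^ 2) :
    Summable fun p : ℤ × ℤ => f (p.1 - p.2) * g p.1 * h p.2 := by
  have := summable_comp_sub_mul_mul (f := fun l => f (-l)) hg0
    (hf.comp_injective neg_injective) hg hh
  refine ((Equiv.prodComm ℤ ℤ).summable_iff.mpr this).congr fun p => ?_
  simp only [Function.comp, Equiv.prodComm_apply, Prod.fst_swap, Prod.snd_swap, neg_sub]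
  ring

lemma summable_conj_mul_conv {s t : ℝ} {v a : ℤ → ℂ} (hv : MemHs (-t) v) (ha : MemHs s a)
    (ht : 0 ≤ t) (hts : t ≤ s) (hs : 1 / 2 < s) :
    Summable fun p : ℤ × ℤ => conj (a p.1) * v (p.1 - p.2) * a p.2 := by
  set b : ℤ → ℝ := fun k => ‖a k‖
  set c : ℤ → ℝ := fun k => wt k ^ t * ‖a k‖
  set w : ℤ → ℝ := fun l => wt l ^ (-t) * ‖v l‖
  have hb : Summable b := ha.summable_norm hs
  have hc : Summable fun k => c k ^ 2 := memHs_iff_summable_sq.mp (ha.mono hts)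
  have hw : Summable fun l => w l ^ 2 := memHs_iff_summable_sq.mp hv
  have hv_eq : ∀ l, ‖v l‖ = w l * wt l ^ t := fun l => by
    rw [mul_right_comm, ← Real.rpow_add (wt_pos l), neg_add_cancel, Real.rpow_zero, one_mul]
  have hbound : ∀ p : ℤ × ℤ, ‖conj (a p.1) * v (p.1 - p.2) * a p.2‖ ≤
      2 ^ t * (w (p.1 - p.2) * c p.1 * b p.2 + w (p.1 - p.2) * b p.1 * c p.2) := by
    rintro ⟨k, j⟩
    have hw0 : 0 ≤ w (k - j) := mul_nonneg (Real.rpow_nonneg (wt_pos _).le _) (norm_nonneg _)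
    calc ‖conj (a k) * v (k - j) * a j‖ = b k * b j * w (k - j) * wt (k - j) ^ t := by
          simp only [norm_mul, Complex.norm_conj, hv_eq, b]; ring
      _ ≤ b k * b j * w (k - j) * (2 ^ t * (wt k ^ t + wt j ^ t)) := by
          gcongr; exact wt_sub_rpow_le ht k j
      _ = _ := by simp only [b, c]; ring
  refine Summable.of_norm_bounded (Summable.mul_left _ ?_) hbound
  exact (summable_comp_sub_mul_mul (fun _ => norm_nonneg _) hw hb hc).add
    (summable_comp_sub_mul_mul' (fun _ => norm_nonneg _) hw hb hc)

lemma im_eq_zero_of_hermitian_eigen {d v a : ℤ → ℂ} {lam : ℂ} (hd : ∀ k, (d k).im = 0)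
    (hreal : ∀ k, v (-k) = conj (v k)) (ha0 : a ≠ 0) (ha : Summable fun k => ‖a k‖ ^ 2)
    (hF : Summable fun p : ℤ × ℤ => conj (a p.1) * v (p.1 - p.2) * a p.2)
    (heq : ∀ k, d k * a k + ∑' j, v (k - j) * a j = lam * a k) :
    lam.im = 0 := by
  set F : ℤ × ℤ → ℂ := fun p => conj (a p.1) * v (p.1 - p.2) * a p.2
  set Q := ∑' p, F p
  have hQ_real : Q.im = 0 := by
    have hswap : ∀ p, conj (F p) = F p.swap := fun ⟨k, j⟩ => by
      simp only [F, map_mul, Complex.conj_conj, ← hreal, neg_sub, Prod.fst_swap, Prod.snd_swap]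
      ring
    have : conj Q = Q := by
      rw [← Complex.conjCLE_apply, Complex.conjCLE.map_tsum]
      simpa [hswap] using (Equiv.prodComm ℤ ℤ).tsum_eq F
    exact Complex.conj_eq_iff_im.mp this
  have hQ : HasSum (fun k => conj (a k) * ∑' j, v (k - j) * a j) Q :=
    hF.hasSum.prod_fiberwise fun k => by
      simpa only [F, ← tsum_mul_left, mul_assoc] using (hF.prod_factor k).hasSum
  set N := ∑' k, ‖a k‖ ^ 2
  have hN : 0 < N := by
    obtain ⟨k, hk⟩ := Function.ne_iff.mp ha0
    exact ha.tsum_pos (fun _ => sq_nonneg _) k (pow_pos (norm_pos_iff.mpr hk) 2)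
  have hL : HasSum (fun k => lam * ((‖a k‖ ^ 2 : ℝ) : ℂ)) (lam * N) :=
    (Complex.hasSum_ofReal.mpr ha.hasSum).mul_left lam
  have hdiag : HasSum (fun k => d k * ((‖a k‖ ^ 2 : ℝ) : ℂ)) (lam * N - Q) := by
    refine (hL.sub hQ).congr_fun fun k => ?_
    have := congrArg (conj (a k) * ·) (heq k)
    simp only [Complex.ofReal_pow, ← Complex.conj_mul'] at this ⊢
    linear_combination this
  have him := Complex.hasSum_im hdiag
  simp only [Complex.mul_im, hd, Complex.ofReal_im, zero_mul, mul_zero, add_zero] at him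
  have : lam.im * N - Q.im = 0 := by simpa using him.unique hasSum_zero
  rw [hQ_real, sub_zero] at this
  exact (mul_eq_zero.mp this).resolve_right hN.ne'

theorem statement12_general (m : ℕ) (hm : 0 < m) (α : ℝ) (hα0 : 0 ≤ α) (hα1 : α < 1)
    (v : ℤ → ℂ) (hv : MemHs (-((m : ℝ) * α)) v)
    (hreal : ∀ k : ℤ, v (-k) = starRingEnd ℂ (v k))
    (lam : ℂ)
    (hlam : ∃ a : ℤ → ℂ, a ≠ 0 ∧ MemHs ((m : ℝ) * (2 - α)) a ∧
      ∀ k : ℤ, (k : ℂ) ^ (2 * m) * (Real.pi : ℂ) ^ (2 * m) * a k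
        + ∑' j : ℤ, v (k - j) * a j = lam * a k) :
    lam.im = 0 := by
  obtain ⟨a, ha0, ha, heq⟩ := hlam
  have hm1 : (1 : ℝ) ≤ m := by exact_mod_cast hm
  have ht : 0 ≤ (m : ℝ) * α := by positivity
  have hts : (m : ℝ) * α ≤ m * (2 - α) := by nlinarith
  have hs : 1 / 2 < (m : ℝ) * (2 - α) := by nlinarith
  refine im_eq_zero_of_hermitian_eigen (fun k => ?_) hreal ha0 (ha.summable_norm_sq (by linarith))
    (summable_conj_mul_conv hv ha ht hts hs) heq
  rw [← Complex.ofReal_intCast, ← Complex.ofReal_pow, ← Complex.ofReal_pow, ← Complex.ofReal_mul]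
  exact Complex.ofReal_im _

theorem statement12 (m : ℕ) (hm : 0 < m) (α : ℝ) (hα0 : 0 ≤ α) (hα1 : α < 1)
    (v : ℤ → ℂ) (hv : MemHs (-((m : ℝ) * α)) v) (hv0 : v 0 = 0)
    (hreal : ∀ k : ℤ, v (-k) = starRingEnd ℂ (v k))
    (lam : ℂ)
    (hlam : ∃ a : ℤ → ℂ, a ≠ 0 ∧ MemHs ((m : ℝ) * (2 - α)) a ∧
      ∀ k : ℤ, (k : ℂ) ^ (2 * m) * (Real.pi : ℂ) ^ (2 * m) * a k
        + ∑' j : ℤ, v (k - j) * a j = lam * a k) :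
    lam.im = 0 :=
  statement12_general m hm α hα0 hα1 v hv hreal lam hlam
end
end

section
/- Let m ∈ ℕ, n ∈ ℕ with n ≥ (8m−4)m/(8m−7), and 0 < r < n^m π^{2m}. Then for every λ ∈ Vert^m_n(r), one has sup_{k ∈ ℤ} |λ − k^{2m}π^{2m}|^{−1/2} ≤ r^{−1/2} + (√3/π^m)·n^{−m+1/2}. -/
open scoped BigOperators
noncomputable section

/-! If `k^{2m} = n^{2m}` the bound is just `|λ - n^{2m}π^{2m}| ≥ r`. Otherwise
`|n^{2m} - k^{2m}| ≥ n^{2m-1} + (n-1)^{2m-1}`, and since `|Re (λ - n^{2m}π^{2m})| ≤ n^m π^{2m}`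
the real part alone gives `|λ - k^{2m}π^{2m}| ≥ π^{2m} n^{2m-1} / 3` as soon as `n ≥ 2`. -/

open Real

lemma sub_mul_pow_add_pow_le_pow_sub_pow {R : Type*} [CommRing R] [LinearOrder R]
    [IsStrictOrderedRing R] {a b : R} (hb : 0 ≤ b) (hba : b ≤ a) (q : ℕ) :
    (a - b) * (a ^ (q + 1) + b ^ (q + 1)) ≤ a ^ (q + 2) - b ^ (q + 2) := by
  have hpow : b ^ q ≤ a ^ q := pow_le_pow_left₀ hb hba q
  have hab : 0 ≤ a * b := mul_nonneg (hb.trans hba) hb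
  have key : a ^ (q + 2) - b ^ (q + 2) - (a - b) * (a ^ (q + 1) + b ^ (q + 1))
      = a * b * (a ^ q - b ^ q) := by ring
  nlinarith [mul_nonneg hab (sub_nonneg.2 hpow)]

lemma pow_add_sub_one_pow_le_abs_pow_sub_pow {n j : ℕ} (hn : 1 ≤ n) (hj : j ≠ n) (q : ℕ) :
    (n : ℝ) ^ (q + 1) + ((n : ℝ) - 1) ^ (q + 1) ≤ |(n : ℝ) ^ (q + 2) - (j : ℝ) ^ (q + 2)| := by
  have hn1 : (0 : ℝ) ≤ n - 1 := sub_nonneg.2 (by exact_mod_cast hn)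
  rcases hj.lt_or_gt with hjn | hnj
  · have hj1 : (j : ℝ) ≤ n - 1 := by
      rw [le_sub_iff_add_le]; exact_mod_cast hjn
    have hmono := pow_le_pow_left₀ (Nat.cast_nonneg j) hj1 (q + 2)
    have hstep := sub_mul_pow_add_pow_le_pow_sub_pow hn1 (sub_le_self _ zero_le_one) q
    rw [sub_sub_cancel, one_mul] at hstep
    refine le_trans ?_ (le_abs_self _)
    linarith
  · have hj1 : (n : ℝ) + 1 ≤ j := by exact_mod_cast hnj
    have hmono := pow_le_pow_left₀ (by positivity) hj1 (q + 2)
    have hstep := sub_mul_pow_add_pow_le_pow_sub_pow (Nat.cast_nonneg n)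
      (le_add_of_nonneg_right (zero_le_one : (0 : ℝ) ≤ 1)) q
    rw [add_sub_cancel_left, one_mul] at hstep
    have hlow := pow_le_pow_left₀ hn1 (by linarith : (n : ℝ) - 1 ≤ n + 1) (q + 1)
    rw [abs_sub_comm]
    refine le_trans ?_ (le_abs_self _)
    linarith

lemma pow_add_pow_div_three_le {x : ℝ} (hx : 2 ≤ x) {m : ℕ} (hm : 1 ≤ m) :
    x ^ m + x ^ (2 * m - 1) / 3 ≤ x ^ (2 * m - 1) + (x - 1) ^ (2 * m - 1) := by
  obtain ⟨q, rfl⟩ := Nat.exists_eq_add_of_le' hm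
  rcases q with _ | q
  · norm_num; linarith
  · have h1 : (2 : ℝ) ≤ x ^ (q + 1) := by
      calc (2 : ℝ) ≤ x := hx
        _ ≤ x ^ (q + 1) := le_self_pow₀ (by linarith) (Nat.succ_ne_zero q)
    have hsplit : x ^ (2 * (q + 1 + 1) - 1) = x ^ (q + 1 + 1) * x ^ (q + 1) := by
      rw [← pow_add]; congr 1; omega
    have hx0 : 0 ≤ x ^ (q + 1 + 1) := by positivity
    rw [hsplit]
    nlinarith [pow_nonneg (by linarith : (0 : ℝ) ≤ x - 1) (2 * (q + 1 + 1) - 1)]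

lemma two_le_threshold {m : ℕ} (hm : 1 ≤ m) : 2 ≤ ((8 * (m : ℝ) - 4) * m) / (8 * m - 7) := by
  have hm' : (1 : ℝ) ≤ m := by exact_mod_cast hm
  rw [le_div_iff₀ (by linarith)]
  nlinarith [sq_nonneg (4 * (m : ℝ) - 5)]

lemma abs_pow_sub_pow_sub_pow_mul_le_diagAbs {m n : ℕ} {lam : ℂ}
    (hre : |(lam - (n : ℂ) ^ (2 * m) * (π : ℂ) ^ (2 * m)).re| ≤ (n : ℝ) ^ m * π ^ (2 * m))
    (k : ℤ) : (|(n : ℝ) ^ (2 * m) - (k : ℝ) ^ (2 * m)| - (n : ℝ) ^ m) * π ^ (2 * m)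
      ≤ diagAbs m lam k := by
  have hre_sub : ∀ x : ℝ, (lam - (x : ℂ) ^ (2 * m) * (π : ℂ) ^ (2 * m)).re
      = lam.re - x ^ (2 * m) * π ^ (2 * m) := fun x => by
    rw [← Complex.ofReal_pow, ← Complex.ofReal_pow, ← Complex.ofReal_mul, Complex.sub_re,
      Complex.ofReal_re]
  have hk := Complex.abs_re_le_norm (lam - (k : ℂ) ^ (2 * m) * (π : ℂ) ^ (2 * m))
  have hk_re := hre_sub k
  have hn_re := hre_sub n
  push_cast at hk_re hn_re
  rw [hk_re] at hk
  rw [hn_re] at hre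
  have htri := abs_sub (lam.re - (k : ℝ) ^ (2 * m) * π ^ (2 * m))
    (lam.re - (n : ℝ) ^ (2 * m) * π ^ (2 * m))
  rw [show lam.re - (k : ℝ) ^ (2 * m) * π ^ (2 * m) - (lam.re - (n : ℝ) ^ (2 * m) * π ^ (2 * m))
    = ((n : ℝ) ^ (2 * m) - (k : ℝ) ^ (2 * m)) * π ^ (2 * m) by ring, abs_mul,
    abs_of_pos (by positivity : (0 : ℝ) < π ^ (2 * m))] at htri
  rw [diagAbs]
  linarith

lemma one_div_sqrt_pi_pow_mul_pow_div_three {m : ℕ} (hm : 1 ≤ m) {x : ℝ} (hx : 0 < x) :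
    1 / √(π ^ (2 * m) * x ^ (2 * m - 1) / 3) = √3 / π ^ m * x ^ (-(m : ℝ) + 1 / 2) := by
  have hexp : x ^ (2 * m - 1) = (x ^ ((m : ℝ) - 1 / 2)) ^ 2 := by
    rw [← Real.rpow_natCast, ← Real.rpow_mul_natCast hx.le]
    congr 1
    push_cast [Nat.cast_sub (by omega : 1 ≤ 2 * m)]
    ring
  rw [hexp, pow_mul', ← mul_pow, Real.sqrt_div' _ (by norm_num : (0 : ℝ) ≤ 3),
    Real.sqrt_sq (by positivity), show -(m : ℝ) + 1 / 2 = -((m : ℝ) - 1 / 2) by ring,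
    Real.rpow_neg hx.le]
  field_simp

lemma cast_pow_two_mul_eq_natAbs_pow {R : Type*} [Ring R] (k : ℤ) (m : ℕ) :
    (k : R) ^ (2 * m) = (k.natAbs : R) ^ (2 * m) := by
  rw [← Int.cast_natCast, ← Int.cast_pow, ← Int.cast_pow, Int.natCast_natAbs,
    Even.pow_abs (even_two_mul m)]

lemma pi_pow_mul_pow_div_three_le_diagAbs {m n : ℕ} (hm : 1 ≤ m) (hn : 2 ≤ (n : ℝ)) {lam : ℂ}
    (hre : |(lam - (n : ℂ) ^ (2 * m) * (π : ℂ) ^ (2 * m)).re| ≤ (n : ℝ) ^ m * π ^ (2 * m))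
    {k : ℤ} (hk : k.natAbs ≠ n) :
    π ^ (2 * m) * (n : ℝ) ^ (2 * m - 1) / 3 ≤ diagAbs m lam k := by
  have hgap := pow_add_sub_one_pow_le_abs_pow_sub_pow (by exact_mod_cast hn.trans' one_le_two)
    hk (2 * m - 2)
  rw [show 2 * m - 2 + 1 = 2 * m - 1 by omega, show 2 * m - 2 + 2 = 2 * m by omega,
    ← cast_pow_two_mul_eq_natAbs_pow] at hgap
  have := abs_pow_sub_pow_sub_pow_mul_le_diagAbs hre k
  nlinarith [pow_add_pow_div_three_le hn hm, pow_pos Real.pi_pos (2 * m)]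

theorem statement18_general (m : ℕ)
    (n : ℕ) (hn : ((8 * (m : ℝ) - 4) * m) / (8 * m - 7) ≤ n)
    (r : ℝ) (hr0 : 0 < r) :
    ∀ lam ∈ VertSet m n r, ∀ k : ℤ,
      1 / Real.sqrt (diagAbs m lam k)
        ≤ 1 / Real.sqrt r + (Real.sqrt 3 / Real.pi ^ m) * (n : ℝ) ^ (-(m : ℝ) + 1 / 2) := by
  rintro lam ⟨hre, hr⟩ k
  by_cases hk : (k : ℂ) ^ (2 * m) = (n : ℂ) ^ (2 * m)
  · have hr_le : r ≤ diagAbs m lam k := by rwa [diagAbs, hk]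
    calc 1 / √(diagAbs m lam k) ≤ 1 / √r :=
          one_div_le_one_div_of_le (Real.sqrt_pos.2 hr0) (Real.sqrt_le_sqrt hr_le)
      _ ≤ _ := le_add_of_nonneg_right (by positivity)
  · have hm : 1 ≤ m := Nat.one_le_iff_ne_zero.2 fun h => hk (by simp [h])
    have hkn : k.natAbs ≠ n := by
      rintro rfl
      exact hk (cast_pow_two_mul_eq_natAbs_pow k m)
    have hn2 : (2 : ℝ) ≤ n := (two_le_threshold hm).trans hn
    have hlow := pi_pow_mul_pow_div_three_le_diagAbs hm hn2 hre hkn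
    calc 1 / √(diagAbs m lam k) ≤ 1 / √(π ^ (2 * m) * (n : ℝ) ^ (2 * m - 1) / 3) :=
          one_div_le_one_div_of_le (Real.sqrt_pos.2 (by positivity)) (Real.sqrt_le_sqrt hlow)
      _ = √3 / π ^ m * (n : ℝ) ^ (-(m : ℝ) + 1 / 2) :=
          one_div_sqrt_pi_pow_mul_pow_div_three hm (by linarith)
      _ ≤ _ := le_add_of_nonneg_left (by positivity)

theorem statement18 (m : ℕ) (hm : 0 < m)
    (n : ℕ) (hn : ((8 * (m : ℝ) - 4) * m) / (8 * m - 7) ≤ n)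
    (r : ℝ) (hr0 : 0 < r) (hr1 : r < (n : ℝ) ^ m * Real.pi ^ (2 * m)) :
    ∀ lam ∈ VertSet m n r, ∀ k : ℤ,
      1 / Real.sqrt (diagAbs m lam k)
        ≤ 1 / Real.sqrt r + (Real.sqrt 3 / Real.pi ^ m) * (n : ℝ) ^ (-(m : ℝ) + 1 / 2) :=
  statement18_general m n hn r hr0
end
end
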